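/- Let k be a field and (P, ⪯) a totally ordered set. Let M = ⊕_{a∈A} k_{I_a} and N = ⊕_{b∈B} k_{J_b} be pointwise finite-dimensional persistence modules over P in which every interval I_a and every interval J_b is unbounded below. If dim_k M(p) = dim_k N(p) for every p ∈ P, then there is a bijection σ : A → B with J_{σ(a)} = I_a for all a ∈ A; in particular M and N are isomorphic. (A decomposition into interval modules with all intervals unbounded below is completely determined by the dimension function.) -/

import Mathlib

/-!
Intervals that are unbounded below are lower sets, and the lower sets of a total order form a
chain. Let `g p = dim M(p)` be the number of intervals containing `p`. For a nonempty lower set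
`S`, the intervals containing `S` are exactly those containing a point of `S` where `g` is
minimal on `S`, and the intervals not contained in `S` are exactly those containing a point
outside `S` where `g` is maximal on `Sᶜ`. Hence the multiplicity of `S` is a difference of two
values of `g`, so it is the same for both decompositions. Matching equal intervals gives the
bijection, and reindexing the direct sum along it gives the isomorphism.
-/

set_option linter.unusedSectionVars false

open Classical

universe u v w w'

section Persistence

variable (k : Type u) [Field k] (P : Type v) [LinearOrder P]

/-- A persistence module over the poset `P`: a functor assigning to each `p : P` a
`k`-vector space and to each pair `p ⪰ p'` a linear map `M p → M p'`. -/
structure PersistenceModule where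
  carrier : P → Type w
  [acg : ∀ p, AddCommGroup (carrier p)]
  [mod : ∀ p, Module k (carrier p)]
  map : ∀ {p p' : P}, p' ≤ p → (carrier p →ₗ[k] carrier p')
  map_id : ∀ p : P, map (le_refl p) = LinearMap.id
  map_comp : ∀ {p p' p'' : P} (h1 : p'' ≤ p') (h2 : p' ≤ p),
      (map h1).comp (map h2) = map (h1.trans h2)

attribute [instance] PersistenceModule.acg PersistenceModule.mod

variable {k P}

/-- A morphism of persistence modules. -/
structure PersistenceHom (M : PersistenceModule.{u,v,w} k P)
    (N : PersistenceModule.{u,v,w'} k P) where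
  f : ∀ p : P, M.carrier p →ₗ[k] N.carrier p
  comm : ∀ {p p' : P} (h : p' ≤ p), (N.map h).comp (f p) = (f p').comp (M.map h)

/-- An isomorphism of persistence modules. -/
structure PersistenceIso (M : PersistenceModule.{u,v,w} k P)
    (N : PersistenceModule.{u,v,w'} k P) where
  e : ∀ p : P, M.carrier p ≃ₗ[k] N.carrier p
  comm : ∀ {p p' : P} (h : p' ≤ p) (x : M.carrier p), e p' (M.map h x) = N.map h (e p x)

variable (P)

/-- An interval of `P`: a nonempty convex subset. -/
def IsInterval (I : Set P) : Prop :=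
  I.Nonempty ∧ ∀ ⦃a b c : P⦄, a ∈ I → c ∈ I → a ≤ b → b ≤ c → b ∈ I

variable (k)

/-- The fibre of the interval module `k_I` at `p`: a copy of `k` if `p ∈ I`, zero otherwise. -/
noncomputable def intervalCarrier (I : Set P) (p : P) : Submodule k k :=
  if p ∈ I then ⊤ else ⊥

theorem intervalCarrier_eq_zero {I : Set P} {p : P} (hp : p ∉ I)
    (x : intervalCarrier k P I p) : (x : k) = 0 := by
  have hx := x.2
  simp only [intervalCarrier, if_neg hp, Submodule.mem_bot] at hx
  exact hx

/-- The structure maps of the interval module. -/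
noncomputable def intervalMapAux (I : Set P) (p p' : P) :
    intervalCarrier k P I p →ₗ[k] intervalCarrier k P I p' where
  toFun x := ⟨if p' ∈ I then (x : k) else 0, by
    split_ifs with h
    · simp [intervalCarrier, h]
    · exact (intervalCarrier k P I p').zero_mem⟩
  map_add' x y := by
    apply Subtype.ext
    by_cases h : p' ∈ I <;> simp [h]
  map_smul' c x := by
    apply Subtype.ext
    by_cases h : p' ∈ I <;> simp [h]

/-- The interval module `k_I` associated to an interval `I ⊆ P`. -/
noncomputable def intervalModule (I : Set P) (hI : IsInterval P I) :
    PersistenceModule.{u,v,u} k P where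
  carrier p := intervalCarrier k P I p
  map {p p'} _ := intervalMapAux k P I p p'
  map_id p := by
    ext x
    by_cases h : p ∈ I
    · simp [intervalMapAux, h]
    · have hx := intervalCarrier_eq_zero k P h x
      simp [intervalMapAux, h, hx]
  map_comp {p p' p''} h1 h2 := by
    ext x
    by_cases h'' : p'' ∈ I
    · by_cases h' : p' ∈ I
      · simp [intervalMapAux, h', h'']
      · have hp : p ∉ I := fun hp => h' (hI.2 h'' hp h1 h2)
        have hx := intervalCarrier_eq_zero k P hp x
        simp [intervalMapAux, h', h'', hx]
    · simp [intervalMapAux, h'']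

/-- The pointwise direct sum of a family of persistence modules. -/
noncomputable def directSumPM {A : Type w'} (Ms : A → PersistenceModule.{u,v,w} k P) :
    PersistenceModule k P where
  carrier p := Π₀ a, (Ms a).carrier p
  map h := DFinsupp.mapRange.linearMap (fun a => (Ms a).map h)
  map_id p := by
    try dsimp only
    have h : (fun a => (Ms a).map (le_refl p)) = fun a => LinearMap.id := by
      funext a; exact (Ms a).map_id p
    rw [h, DFinsupp.mapRange.linearMap_id]
  map_comp h1 h2 := by
    try dsimp only
    rw [← DFinsupp.mapRange.linearMap_comp]
    congr 1
    funext a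
    exact (Ms a).map_comp h1 h2

end Persistence

/-- An interval is bounded below if some point of `P` outside it lies strictly below a point
of it. -/
def BddBelowInterval (P : Type v) [LinearOrder P] (I : Set P) : Prop :=
  ∃ p ∉ I, ∃ p' ∈ I, p < p'

open Set

theorem isLowerSet_of_not_bddBelowInterval {P : Type v} [LinearOrder P] {I : Set P}
    (h : ¬ BddBelowInterval P I) : IsLowerSet I := by
  intro q r hrq hq
  by_contra hr
  exact h ⟨r, hr, q, hq, hrq.lt_of_ne fun hrq => hr (hrq ▸ hq)⟩

section LowerSetFamilies

variable {P : Type*} [LinearOrder P] {A B : Type*}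

theorem setOf_mem_eq_of_le_of_ncard_le {I : A → Set P} (hI : ∀ a, IsLowerSet (I a))
    {p q : P} (hpq : p ≤ q) (hfin : {a | p ∈ I a}.Finite)
    (hcard : {a | p ∈ I a}.ncard ≤ {a | q ∈ I a}.ncard) :
    {a | q ∈ I a} = {a | p ∈ I a} :=
  eq_of_subset_of_ncard_le (fun a ha => hI a hpq ha) hcard hfin

theorem setOf_superset_eq_setOf_mem {I : A → Set P} (hI : ∀ a, IsLowerSet (I a))
    (hfin : ∀ p, {a | p ∈ I a}.Finite) {S : Set P} {p : P} (hp : p ∈ S)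
    (hmin : ∀ q ∈ S, {a | p ∈ I a}.ncard ≤ {a | q ∈ I a}.ncard) :
    {a | S ⊆ I a} = {a | p ∈ I a} := by
  refine Subset.antisymm (fun a ha => ha hp) fun a ha q hq => ?_
  rcases le_total q p with hqp | hpq
  · exact hI a hqp ha
  · rw [← setOf_mem_eq_of_le_of_ncard_le hI hpq (hfin p) (hmin q hq)] at ha
    exact ha

theorem setOf_not_subset_eq_setOf_mem {I : A → Set P} (hI : ∀ a, IsLowerSet (I a))
    (hfin : ∀ p, {a | p ∈ I a}.Finite) {S : Set P} {q : P} (hq : q ∉ S)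
    (hmax : ∀ r ∉ S, {a | r ∈ I a}.ncard ≤ {a | q ∈ I a}.ncard) :
    {a | ¬ I a ⊆ S} = {a | q ∈ I a} := by
  refine Subset.antisymm (fun a ha => ?_) fun a ha hsub => hq (hsub ha)
  obtain ⟨r, hr, hrS⟩ := not_subset.1 ha
  rcases le_total q r with hqr | hrq
  · exact hI a hqr hr
  · rw [setOf_mem_eq_of_le_of_ncard_le hI hrq (hfin r) (hmax r hrS)]
    exact hr

theorem ncard_setOf_superset_eq {I : A → Set P} {J : B → Set P}
    (hI : ∀ a, IsLowerSet (I a)) (hJ : ∀ b, IsLowerSet (J b))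
    (hfinI : ∀ p, {a | p ∈ I a}.Finite) (hfinJ : ∀ p, {b | p ∈ J b}.Finite)
    (hcount : ∀ p, {a | p ∈ I a}.ncard = {b | p ∈ J b}.ncard) {S : Set P} (hS : S.Nonempty) :
    {a | S ⊆ I a}.ncard = {b | S ⊆ J b}.ncard := by
  set p := Function.argminOn (fun p => {a | p ∈ I a}.ncard) S hS
  have hp : p ∈ S := Function.argminOn_mem _ S hS
  have hmin : ∀ q ∈ S, {a | p ∈ I a}.ncard ≤ {a | q ∈ I a}.ncard :=
    fun q hq => Function.argminOn_le (fun p => {a | p ∈ I a}.ncard) S hq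
  rw [setOf_superset_eq_setOf_mem hI hfinI hp hmin,
    setOf_superset_eq_setOf_mem hJ hfinJ hp (by simpa only [hcount] using hmin), hcount]

theorem ncard_setOf_not_subset_eq {I : A → Set P} {J : B → Set P}
    (hI : ∀ a, IsLowerSet (I a)) (hJ : ∀ b, IsLowerSet (J b))
    (hfinI : ∀ p, {a | p ∈ I a}.Finite) (hfinJ : ∀ p, {b | p ∈ J b}.Finite)
    (hcount : ∀ p, {a | p ∈ I a}.ncard = {b | p ∈ J b}.ncard) {S : Set P}
    (hS : IsLowerSet S) (hne : S.Nonempty) :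
    {a | ¬ I a ⊆ S}.ncard = {b | ¬ J b ⊆ S}.ncard := by
  rcases (Sᶜ).eq_empty_or_nonempty with hSc | hSc
  · simp [compl_empty_iff.1 hSc]
  obtain ⟨p, hp⟩ := hne
  have hbdd : BddAbove ((fun q => {a | q ∈ I a}.ncard) '' Sᶜ) := by
    refine ⟨{a | p ∈ I a}.ncard, ?_⟩
    rintro _ ⟨q, hq, rfl⟩
    have hpq : p ≤ q := (le_total p q).resolve_right fun hqp => hq (hS hqp hp)
    exact ncard_le_ncard (fun a ha => hI a hpq ha) (hfinI p)
  obtain ⟨_, ⟨q, hq, rfl⟩, hmax⟩ := hbdd.exists_isGreatest_of_nonempty (hSc.image _)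
  have hmaxI : ∀ r ∉ S, {a | r ∈ I a}.ncard ≤ {a | q ∈ I a}.ncard :=
    fun r hr => hmax ⟨r, hr, rfl⟩
  rw [setOf_not_subset_eq_setOf_mem hI hfinI hq hmaxI,
    setOf_not_subset_eq_setOf_mem hJ hfinJ hq (by simpa only [hcount] using hmaxI), hcount]

theorem setOf_eq_eq_sdiff (I : A → Set P) (S : Set P) :
    {a | I a = S} = {a | S ⊆ I a} \ {a | ¬ I a ⊆ S} := by
  ext a
  simp [subset_antisymm_iff, and_comm]

theorem ncard_setOf_eq_eq_sub {I : A → Set P} (hI : ∀ a, IsLowerSet (I a))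
    (hfin : ∀ p, {a | p ∈ I a}.Finite) {S : Set P} (hS : IsLowerSet S) (hne : S.Nonempty) :
    {a | I a = S}.ncard = {a | S ⊆ I a}.ncard - {a | ¬ I a ⊆ S}.ncard := by
  obtain ⟨p, hp⟩ := hne
  have hsub : {a | ¬ I a ⊆ S} ⊆ {a | S ⊆ I a} := fun a ha => ((hI a).total hS).resolve_left ha
  rw [setOf_eq_eq_sdiff, ncard_sdiff' hsub ((hfin p).subset fun a ha => ha hp)]

theorem ncard_setOf_eq_eq {I : A → Set P} {J : B → Set P}
    (hI : ∀ a, IsLowerSet (I a)) (hJ : ∀ b, IsLowerSet (J b))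
    (hfinI : ∀ p, {a | p ∈ I a}.Finite) (hfinJ : ∀ p, {b | p ∈ J b}.Finite)
    (hcount : ∀ p, {a | p ∈ I a}.ncard = {b | p ∈ J b}.ncard) {S : Set P}
    (hS : IsLowerSet S) (hne : S.Nonempty) :
    {a | I a = S}.ncard = {b | J b = S}.ncard := by
  rw [ncard_setOf_eq_eq_sub hI hfinI hS hne, ncard_setOf_eq_eq_sub hJ hfinJ hS hne,
    ncard_setOf_superset_eq hI hJ hfinI hfinJ hcount hne,
    ncard_setOf_not_subset_eq hI hJ hfinI hfinJ hcount hS hne]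

theorem exists_equiv_of_ncard_fiber_eq {C : Type*} {f : A → C} {g : B → C}
    (hf : ∀ c, {a | f a = c}.Finite) (hg : ∀ c, {b | g b = c}.Finite)
    (hfg : ∀ c, {a | f a = c}.ncard = {b | g b = c}.ncard) :
    ∃ σ : A ≃ B, ∀ a, g (σ a) = f a := by
  have e : ∀ c, Nonempty ({a | f a = c} ≃ {b | g b = c}) := fun c => by
    have := (hf c).to_subtype
    have := (hg c).to_subtype
    exact Finite.card_eq.1 (by rw [Nat.card_coe_set_eq, Nat.card_coe_set_eq, hfg c])
  exact ⟨Equiv.ofFiberEquiv fun c => (e c).some, Equiv.ofFiberEquiv_map _⟩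

theorem exists_equiv_of_ncard_setOf_mem_eq {I : A → Set P} {J : B → Set P}
    (hI : ∀ a, IsLowerSet (I a)) (hJ : ∀ b, IsLowerSet (J b))
    (hIne : ∀ a, (I a).Nonempty) (hJne : ∀ b, (J b).Nonempty)
    (hfinI : ∀ p, {a | p ∈ I a}.Finite) (hfinJ : ∀ p, {b | p ∈ J b}.Finite)
    (hcount : ∀ p, {a | p ∈ I a}.ncard = {b | p ∈ J b}.ncard) :
    ∃ σ : A ≃ B, ∀ a, J (σ a) = I a := by
  refine exists_equiv_of_ncard_fiber_eq (fun S => ?_) (fun S => ?_) fun S => ?_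
  · rcases S.eq_empty_or_nonempty with rfl | ⟨p, hp⟩
    · simp [(hIne _).ne_empty]
    · exact (hfinI p).subset fun a (ha : I a = S) => show p ∈ I a from ha ▸ hp
  · rcases S.eq_empty_or_nonempty with rfl | ⟨p, hp⟩
    · simp [(hJne _).ne_empty]
    · exact (hfinJ p).subset fun b (hb : J b = S) => show p ∈ J b from hb ▸ hp
  by_cases hS : IsLowerSet S ∧ S.Nonempty
  · exact ncard_setOf_eq_eq hI hJ hfinI hfinJ hcount hS.1 hS.2
  · have hIS : {a | I a = S} = ∅ :=
      eq_empty_of_forall_notMem fun a (ha : I a = S) => hS (ha ▸ ⟨hI a, hIne a⟩)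
    have hJS : {b | J b = S} = ∅ :=
      eq_empty_of_forall_notMem fun b (hb : J b = S) => hS (hb ▸ ⟨hJ b, hJne b⟩)
    rw [hIS, hJS, ncard_empty, ncard_empty]

end LowerSetFamilies

section IntervalModules

variable (k : Type u) [Field k] {P : Type v} [LinearOrder P]

noncomputable def intervalCarrierBasis (I : Set P) (p : P) :
    Module.Basis (PLift (p ∈ I)) k (intervalCarrier k P I p) :=
  if h : p ∈ I then
    letI : Unique (PLift (p ∈ I)) := ⟨⟨⟨h⟩⟩, fun _ => rfl⟩
    (Module.Basis.singleton _ k).map (LinearEquiv.ofTop _ (by simp [intervalCarrier, h])).symm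
  else
    have : IsEmpty (PLift (p ∈ I)) := ⟨fun x => h x.down⟩
    have : Subsingleton (intervalCarrier k P I p) := ⟨fun x y => Subtype.ext <|
      (intervalCarrier_eq_zero k P h x).trans (intervalCarrier_eq_zero k P h y).symm⟩
    Module.Basis.empty _

variable {A : Type*} (I : A → Set P) (p : P)

theorem finrank_dfinsupp_intervalCarrier :
    Module.finrank k (Π₀ a, intervalCarrier k P (I a) p) = {a | p ∈ I a}.ncard := by
  rw [Module.finrank_eq_nat_card_basis (DFinsupp.basis fun a => intervalCarrierBasis k (I a) p),
    Nat.card_congr (Equiv.sigmaPLiftEquivSubtype _)]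
  exact Nat.card_coe_set_eq _

theorem finite_setOf_mem_of_finiteDimensional
    [hfd : FiniteDimensional k (Π₀ a, intervalCarrier k P (I a) p)] : {a | p ∈ I a}.Finite := by
  have := Module.Finite.finite_basis (DFinsupp.basis fun a => intervalCarrierBasis k (I a) p)
  exact finite_coe_iff.1 (Finite.of_equiv _ (Equiv.sigmaPLiftEquivSubtype fun a => p ∈ I a))

end IntervalModules

noncomputable def directSumPMCongrLeft {k : Type u} [Field k] {P : Type v} [LinearOrder P]
    {A B : Type*} (Ms : B → PersistenceModule.{u,v,w} k P) (σ : A ≃ B) :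
    PersistenceIso (directSumPM k P fun a => Ms (σ a)) (directSumPM k P Ms) where
  e p := (DFinsupp.domLCongr (R := k) (M := fun b => (Ms b).carrier p) σ.symm).symm
  comm {p p'} h x := by
    change (DFinsupp.domLCongr (R := k) (M := fun b => (Ms b).carrier p') σ.symm).symm
        (DFinsupp.mapRange.linearMap (fun a => (Ms (σ a)).map h) x) =
      DFinsupp.mapRange.linearMap (fun b => (Ms b).map h)
        ((DFinsupp.domLCongr (R := k) (M := fun b => (Ms b).carrier p) σ.symm).symm x)
    obtain ⟨y, rfl⟩ :=
      (DFinsupp.domLCongr (R := k) (M := fun b => (Ms b).carrier p) σ.symm).surjective x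
    rw [LinearEquiv.symm_apply_eq, LinearEquiv.symm_apply_apply]
    ext a
    simp

/-- a decomposition of a pointwise finite-dimensional persistence module into
interval modules whose intervals are all unbounded below is completely determined by the
dimension function: if `M = ⊕_a k_{I_a}` and `N = ⊕_b k_{J_b}` with all intervals unbounded
below and `dim M(p) = dim N(p)` for all `p`, then there is a bijection `σ : A ≃ B` with
`J_{σ(a)} = I_a`; in particular `M ≅ N`. -/
theorem statement15 (k : Type u) [Field k] (P : Type v) [LinearOrder P]
    {A : Type w'} {B : Type w''} (I : A → Set P) (J : B → Set P)
    (hI : ∀ a, IsInterval P (I a)) (hJ : ∀ b, IsInterval P (J b))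
    (hIub : ∀ a, ¬ BddBelowInterval P (I a)) (hJub : ∀ b, ¬ BddBelowInterval P (J b))
    (hMfd : ∀ p : P, FiniteDimensional k
      ((directSumPM k P (fun a => intervalModule k P (I a) (hI a))).carrier p))
    (hNfd : ∀ p : P, FiniteDimensional k
      ((directSumPM k P (fun b => intervalModule k P (J b) (hJ b))).carrier p))
    (hdim : ∀ p : P,
      Module.finrank k ((directSumPM k P (fun a => intervalModule k P (I a) (hI a))).carrier p) =
      Module.finrank k ((directSumPM k P (fun b => intervalModule k P (J b) (hJ b))).carrier p)) :
    (∃ σ : A ≃ B, ∀ a : A, J (σ a) = I a) ∧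
    Nonempty (PersistenceIso (directSumPM k P (fun a => intervalModule k P (I a) (hI a)))
      (directSumPM k P (fun b => intervalModule k P (J b) (hJ b)))) := by
  have hfinI : ∀ p, {a | p ∈ I a}.Finite := fun p =>
    finite_setOf_mem_of_finiteDimensional k I p (hfd := hMfd p)
  have hfinJ : ∀ p, {b | p ∈ J b}.Finite := fun p =>
    finite_setOf_mem_of_finiteDimensional k J p (hfd := hNfd p)
  have hcount : ∀ p, {a | p ∈ I a}.ncard = {b | p ∈ J b}.ncard := fun p => by
    rw [← finrank_dfinsupp_intervalCarrier k I p, ← finrank_dfinsupp_intervalCarrier k J p]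
    exact hdim p
  obtain ⟨σ, hσ⟩ := exists_equiv_of_ncard_setOf_mem_eq
    (fun a => isLowerSet_of_not_bddBelowInterval (hIub a))
    (fun b => isLowerSet_of_not_bddBelowInterval (hJub b))
    (fun a => (hI a).1) (fun b => (hJ b).1) hfinI hfinJ hcount
  refine ⟨⟨σ, hσ⟩, ?_⟩
  obtain rfl : I = fun a => J (σ a) := funext fun a => (hσ a).symm
  exact ⟨directSumPMCongrLeft (fun b => intervalModule k P (J b) (hJ b)) σ⟩
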